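/- Let A = k[[t^a, t^{a+1}]] with a ≥ 2, q < a, 0 < s ∈ H = ⟨a, a+1⟩ with s < aq. Write s = aℓ + r with 1 ≤ ℓ < q and 0 ≤ r < a (so r ≤ ℓ), and set p = (a−1) + (ℓ−q). Then the ideal I = (t^s) : 𝔪^q equals (t^s) + 𝔪^{p+1} + (t^{ap+i} : p−ℓ+r < i ≤ p). In particular, if r = 0 then I = (t^s) + 𝔪^p. -/

import Mathlib

/-!
Every ideal in sight is a monomial ideal, and an ideal spanned by the monomials `t^n`, `n ∈ E`
(`E ⊆ H` finite) consists exactly of the power series supported in `E + H`. Hence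
`(t^s) : 𝔪^q` is the monomial ideal of those `m ∈ H` with `m + aq + j ∈ s + H` for all `j ≤ q`,
and the theorem becomes a statement about `H = ⟨a, a+1⟩`, where `aL + R` with `R < a` lies in `H`
iff `R ≤ L`. Write `m = aμ + ρ` with `ρ < a`. If `μ > p` then `t^m ∈ 𝔪^{p+1}`. Otherwise the test
exponent `j = r - ρ - 1` rules out `ρ < r`, `j = q` shows `m ∈ s + H` when `ρ - r + q < a`, and
`j = a - 1 - (ρ - r)` forces `m = ap + ρ` with `ρ > p - ℓ + r` in the remaining case. Conversely
every listed generator passes all tests because `a(a-1) + ℕ ⊆ H`.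
-/

set_option maxHeartbeats 1000000
set_option synthInstance.maxHeartbeats 1000000

open PowerSeries

/-- The numerical semigroup ring `k[[H]]`: power series supported on `H`. -/
noncomputable def ssr (k : Type) [Field k] (H : AddSubmonoid ℕ) :
    Subalgebra k (PowerSeries k) where
  carrier := {f | ∀ n : ℕ, n ∉ H → PowerSeries.coeff n f = 0}
  mul_mem' := by
    intro f g hf hg n hn
    rw [Set.mem_setOf_eq] at hf hg
    rw [PowerSeries.coeff_mul]
    apply Finset.sum_eq_zero
    rintro ⟨i, j⟩ hij
    replace hij : i + j = n := by simpa using hij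
    by_cases hi : i ∈ H
    · have hj : j ∉ H := fun hj => hn (hij ▸ H.add_mem hi hj)
      rw [hg j hj, mul_zero]
    · rw [hf i hi, zero_mul]
  add_mem' := by
    intro f g hf hg n hn
    rw [Set.mem_setOf_eq] at hf hg
    rw [map_add, hf n hn, hg n hn, add_zero]
  one_mem' := by
    intro n hn
    have h0 : n ≠ 0 := fun h => hn (by rw [h]; exact H.zero_mem)
    simp [PowerSeries.coeff_one, h0]
  zero_mem' := by
    intro n _
    simp
  algebraMap_mem' := by
    intro r n hn
    have h0 : n ≠ 0 := fun h => hn (by rw [h]; exact H.zero_mem)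
    simp [PowerSeries.algebraMap_apply, PowerSeries.coeff_C, h0]

/-- The monomial `t^n` as an element of `k[[H]]`, for `n ∈ H`. -/
noncomputable def tp (k : Type) [Field k] (H : AddSubmonoid ℕ) (n : ℕ) (hn : n ∈ H) :
    ssr k H :=
  ⟨PowerSeries.X ^ n, by
    intro m hm
    rw [PowerSeries.coeff_X_pow]
    exact if_neg (fun h => hm (by rw [h]; exact hn))⟩

/-- The maximal ideal of `k[[H]]`, generated by the monomials `t^n`, `0 < n ∈ H`. -/
noncomputable def mIdeal (k : Type) [Field k] (H : AddSubmonoid ℕ) : Ideal (ssr k H) :=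
  Ideal.span {x | ∃ n : ℕ, ∃ hn : n ∈ H, 0 < n ∧ x = tp k H n hn}

open Pointwise

theorem Nat.mem_singleton_add_iff {n m : ℕ} {S : Set ℕ} :
    m ∈ ({n} + S : Set ℕ) ↔ n ≤ m ∧ m - n ∈ S := by
  rw [Set.singleton_add]
  constructor
  · rintro ⟨h, hh, rfl⟩
    simpa using hh
  · rintro ⟨hnm, hS⟩
    exact ⟨m - n, hS, Nat.add_sub_cancel' hnm⟩

/-- The exponents of the monomial generators `t^{ac+j}`, `j ≤ c`, of `(t^a, t^{a+1})^c`. -/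
def maxPowExponents (a c : ℕ) : Set ℕ :=
  (a * c + ·) '' Set.Iic c

theorem mul_add_mem_maxPowExponents {a c j : ℕ} (hj : j ≤ c) :
    a * c + j ∈ maxPowExponents a c :=
  ⟨j, hj, rfl⟩

theorem maxPowExponents_finite (a c : ℕ) : (maxPowExponents a c).Finite :=
  (Set.finite_Iic c).image _

theorem maxPowExponents_subset {H : AddSubmonoid ℕ} {a : ℕ} (haH : a ∈ H) (ha1H : a + 1 ∈ H)
    (c : ℕ) : maxPowExponents a c ⊆ H := by
  rintro _ ⟨j, hj, rfl⟩
  obtain ⟨d, rfl⟩ := Nat.exists_eq_add_of_le (Set.mem_Iic.1 hj)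
  show a * (j + d) + j ∈ H
  rw [show a * (j + d) + j = d • a + j • (a + 1) by simp only [smul_eq_mul]; ring]
  exact add_mem (nsmul_mem haH d) (nsmul_mem ha1H j)

section MonomialIdeal

variable {k : Type} [Field k] {H : AddSubmonoid ℕ}

theorem coe_tp (n : ℕ) (hn : n ∈ H) : (tp k H n hn : PowerSeries k) = X ^ n := rfl

theorem tp_zero : tp k H 0 (zero_mem H) = 1 :=
  Subtype.ext (pow_zero X)

theorem tp_add (n m : ℕ) (hn : n ∈ H) (hm : m ∈ H) :
    tp k H (n + m) (add_mem hn hm) = tp k H n hn * tp k H m hm :=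
  Subtype.ext (pow_add X n m)

theorem coeff_tp_mul (n : ℕ) (hn : n ∈ H) (f : ssr k H) (m : ℕ) :
    coeff m ((tp k H n hn * f : ssr k H) : PowerSeries k) =
      if n ≤ m then coeff (m - n) (f : PowerSeries k) else 0 :=
  coeff_X_pow_mul' _ _ _

variable (k H) in
noncomputable def monomials (E : Set ℕ) : Set (ssr k H) :=
  {x | ∃ n ∈ E, ∃ hn : n ∈ H, x = tp k H n hn}

variable (k H) in
noncomputable def monomialIdeal (E : Set ℕ) : Ideal (ssr k H) :=
  Ideal.span (monomials k H E)

theorem monomials_image {ι : Type*} (f : ι → ℕ) (S : Set ι) :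
    monomials k H (f '' S) = {x | ∃ i ∈ S, ∃ hn : f i ∈ H, x = tp k H (f i) hn} :=
  Set.ext fun _ => ⟨fun ⟨_, ⟨i, hi, hin⟩, hn, hx⟩ => ⟨i, hi, hin ▸ hn, by subst hin; exact hx⟩,
    fun ⟨i, hi, hn, hx⟩ => ⟨_, ⟨i, hi, rfl⟩, hn, hx⟩⟩

theorem span_singleton_tp (n : ℕ) (hn : n ∈ H) :
    Ideal.span {tp k H n hn} = monomialIdeal k H {n} := by
  congr 1
  ext x
  exact ⟨fun hx => ⟨n, rfl, hn, hx⟩, fun ⟨_, hx, _, h⟩ => by subst hx; exact h⟩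

theorem monomialIdeal_union (E F : Set ℕ) :
    monomialIdeal k H (E ∪ F) = monomialIdeal k H E ⊔ monomialIdeal k H F := by
  rw [monomialIdeal, monomialIdeal, monomialIdeal, ← Ideal.span_union]
  congr 1
  ext x
  simp only [monomials, Set.mem_union, Set.mem_ofPred_eq, or_and_right, exists_or]

theorem monomialIdeal_mono {E F : Set ℕ} (h : E ⊆ F) :
    monomialIdeal k H E ≤ monomialIdeal k H F :=
  Ideal.span_mono fun _ ⟨n, hn, hnH, hx⟩ => ⟨n, h hn, hnH, hx⟩

theorem monomialIdeal_le_of_subset_add {E F : Set ℕ} (hF : F ⊆ H) (h : E ⊆ F + H) :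
    monomialIdeal k H E ≤ monomialIdeal k H F := by
  refine Ideal.span_le.2 ?_
  rintro _ ⟨_, hnE, -, rfl⟩
  obtain ⟨n, hn, h, hh, rfl⟩ := h hnE
  rw [tp_add n h (hF hn) hh]
  exact Ideal.mul_mem_right _ _ (Ideal.subset_span ⟨n, hn, hF hn, rfl⟩)

theorem pair_pow_eq_monomials {a : ℕ} (haH : a ∈ H) (ha1H : a + 1 ∈ H) (c : ℕ) :
    ({tp k H a haH, tp k H (a + 1) ha1H} : Set (ssr k H)) ^ c =
      monomials k H (maxPowExponents a c) := by
  induction c with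
  | zero =>
    ext x
    simp [monomials, maxPowExponents, ← tp_zero]
  | succ c ih =>
    rw [pow_succ, ih]
    ext x
    constructor
    · rintro ⟨_, ⟨_, ⟨j, hj, rfl⟩, hn, rfl⟩, y, rfl | rfl, rfl⟩
      · exact ⟨_, ⟨j, Set.mem_Iic.2 (Nat.le_succ_of_le hj), by ring⟩, _, (tp_add _ _ _ _).symm⟩
      · exact ⟨_, ⟨j + 1, Set.mem_Iic.2 (Nat.succ_le_succ hj), by ring⟩, _,
          (tp_add _ _ _ _).symm⟩
    · rintro ⟨_, ⟨j, hj, rfl⟩, hn, rfl⟩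
      rcases (Set.mem_Iic.1 hj).lt_or_eq with hj | rfl
      · have hjc := mul_add_mem_maxPowExponents (a := a) (Nat.le_of_lt_succ hj)
        refine ⟨_, ⟨_, hjc, maxPowExponents_subset haH ha1H c hjc, rfl⟩, _, Or.inl rfl, ?_⟩
        dsimp only
        rw [← tp_add]
        congr 1
        ring
      · have hcc := mul_add_mem_maxPowExponents (a := a) (le_refl c)
        refine ⟨_, ⟨_, hcc, maxPowExponents_subset haH ha1H c hcc, rfl⟩, _, Or.inr rfl, ?_⟩
        dsimp only
        rw [← tp_add]
        congr 1
        ring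

theorem span_pair_pow {a : ℕ} (haH : a ∈ H) (ha1H : a + 1 ∈ H) (c : ℕ) :
    Ideal.span {tp k H a haH, tp k H (a + 1) ha1H} ^ c =
      monomialIdeal k H (maxPowExponents a c) := by
  rw [monomialIdeal, ← pair_pow_eq_monomials, Ideal.span, Submodule.span_pow]

theorem mem_add_of_mem_monomialIdeal {E : Set ℕ} {f : ssr k H}
    (hf : f ∈ monomialIdeal k H E) {m : ℕ} (hm : coeff m (f : PowerSeries k) ≠ 0) :
    m ∈ E + H := by
  induction hf using Submodule.span_induction generalizing m with
  | mem x hx =>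
    obtain ⟨n, hnE, hn, rfl⟩ := hx
    rw [coe_tp, coeff_X_pow] at hm
    obtain rfl : m = n := by by_contra h; simp [h] at hm
    exact ⟨m, hnE, 0, zero_mem H, add_zero m⟩
  | zero => simp at hm
  | add x y _ _ hx hy =>
    by_cases hxm : coeff m (x : PowerSeries k) = 0
    · exact hy (by simpa [hxm] using hm)
    · exact hx hxm
  | smul c x _ hx =>
    replace hm : coeff m ((c : PowerSeries k) * (x : PowerSeries k)) ≠ 0 := hm
    rw [coeff_mul] at hm
    obtain ⟨⟨i, j⟩, hij, hne⟩ := Finset.exists_ne_zero_of_sum_ne_zero hm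
    rw [Finset.HasAntidiagonal.mem_antidiagonal] at hij
    have hi : i ∈ H := by_contra fun hi => hne (by rw [c.2 i hi, zero_mul])
    obtain ⟨n, hnE, h, hh, rfl⟩ := hx (right_ne_zero_of_mul hne)
    exact ⟨n, hnE, h + i, add_mem hh hi, by simp only at hij ⊢; omega⟩

theorem exists_coeff_sub_tp_mul (f : ssr k H) (n : ℕ) (hn : n ∈ H) :
    ∃ g : ssr k H, ∀ m, coeff m ((f - tp k H n hn * g : ssr k H) : PowerSeries k) ≠ 0 →
      coeff m (f : PowerSeries k) ≠ 0 ∧ m ∉ ({n} + H : Set ℕ) := by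
  classical
  refine ⟨⟨mk fun h => if h ∈ H then coeff (n + h) (f : PowerSeries k) else 0,
    fun h hh => by simp [hh]⟩, fun m hm => ?_⟩
  rw [AddSubgroupClass.coe_sub, map_sub, coeff_tp_mul] at hm
  rw [Nat.mem_singleton_add_iff]
  by_cases hnm : n ≤ m
  · by_cases hmn : m - n ∈ H
    · simp [hnm, hmn, Nat.add_sub_cancel' hnm] at hm
    · simp_all
  · simp_all

theorem mem_monomialIdeal_of_forall_mem_add {E : Set ℕ} (hE : E.Finite) (hEH : E ⊆ H)
    {f : ssr k H} (hf : ∀ m, coeff m (f : PowerSeries k) ≠ 0 → m ∈ E + H) :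
    f ∈ monomialIdeal k H E := by
  induction E, hE using Set.Finite.induction_on generalizing f with
  | empty =>
    obtain rfl : f = 0 := Subtype.ext (ext fun m => by_contra fun hm => by simpa using hf m hm)
    exact zero_mem _
  | @insert n E _ _ ih =>
    have hn : n ∈ H := hEH (Set.mem_insert n E)
    obtain ⟨g, hg⟩ := exists_coeff_sub_tp_mul f n hn
    have hrest : f - tp k H n hn * g ∈ monomialIdeal k H E := by
      refine ih ((Set.subset_insert n E).trans hEH) fun m hm => ?_
      obtain ⟨hfm, hmn⟩ := hg m hm
      obtain ⟨n', rfl | hn', h, hh, rfl⟩ := hf m hfm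
      · exact absurd (Set.add_mem_add (Set.mem_singleton n') hh) hmn
      · exact ⟨n', hn', h, hh, rfl⟩
    rw [← sub_add_cancel f (tp k H n hn * g)]
    exact add_mem (monomialIdeal_mono (Set.subset_insert n E) hrest)
      (Ideal.mul_mem_right _ _ (Ideal.subset_span ⟨n, Set.mem_insert n E, hn, rfl⟩))

theorem mem_monomialIdeal_iff {E : Set ℕ} (hE : E.Finite) (hEH : E ⊆ H) {f : ssr k H} :
    f ∈ monomialIdeal k H E ↔ ∀ m, coeff m (f : PowerSeries k) ≠ 0 → m ∈ E + H :=
  ⟨fun hf _ => mem_add_of_mem_monomialIdeal hf, mem_monomialIdeal_of_forall_mem_add hE hEH⟩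

theorem tp_mul_mem_monomialIdeal_iff {E : Set ℕ} (hE : E.Finite) (hEH : E ⊆ H) {n : ℕ}
    (hn : n ∈ H) {f : ssr k H} :
    tp k H n hn * f ∈ monomialIdeal k H E ↔
      ∀ m, coeff m (f : PowerSeries k) ≠ 0 → m + n ∈ E + H := by
  rw [mem_monomialIdeal_iff hE hEH]
  refine ⟨fun h m hm => h (m + n) ?_, fun h m hm => ?_⟩
  · rwa [coeff_tp_mul, if_pos (Nat.le_add_left n m), Nat.add_sub_cancel]
  · rw [coeff_tp_mul] at hm
    split_ifs at hm with hnm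
    · simpa [Nat.sub_add_cancel hnm] using h _ hm
    · exact absurd rfl hm

theorem colon_monomialIdeal_eq {E F G : Set ℕ} (hE : E.Finite) (hEH : E ⊆ H) (hFH : F ⊆ H)
    (hG : G.Finite) (hGH : G ⊆ H) (hEFG : ∀ m ∈ H, (∀ j ∈ F, m + j ∈ E + H) ↔ m ∈ G + H) :
    (monomialIdeal k H E).colon (monomialIdeal k H F : Set (ssr k H)) = monomialIdeal k H G := by
  ext f
  rw [show (monomialIdeal k H F : Set (ssr k H)) = Ideal.span (monomials k H F) from rfl,
    Ideal.colon_span, Submodule.mem_colon, mem_monomialIdeal_iff hG hGH]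
  have hcolon : (∀ x ∈ monomials k H F, f • x ∈ monomialIdeal k H E) ↔
      ∀ j ∈ F, ∀ m, coeff m (f : PowerSeries k) ≠ 0 → m + j ∈ E + H := by
    refine ⟨fun h j hj => ?_, fun h x ⟨j, hj, hjH, hx⟩ => ?_⟩
    · rw [← tp_mul_mem_monomialIdeal_iff hE hEH (hFH hj), mul_comm]
      exact h _ ⟨j, hj, hFH hj, rfl⟩
    · rw [hx, smul_eq_mul, mul_comm, tp_mul_mem_monomialIdeal_iff hE hEH hjH]
      exact h j hj
  rw [hcolon, forall₂_comm]
  exact forall₂_congr fun m hm => hEFG m (by_contra fun hmH => hm (f.2 m hmH))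

end MonomialIdeal

section ConsecutiveSemigroup

variable {a : ℕ}

theorem mul_add_mem_closure_pair {L R : ℕ} (h : R ≤ L) :
    a * L + R ∈ AddSubmonoid.closure {a, a + 1} :=
  maxPowExponents_subset (AddSubmonoid.subset_closure (by simp))
    (AddSubmonoid.subset_closure (by simp)) L (mul_add_mem_maxPowExponents h)

theorem mem_closure_pair_iff (ha : 0 < a) {n : ℕ} :
    n ∈ AddSubmonoid.closure {a, a + 1} ↔ n % a ≤ n / a := by
  refine ⟨fun hn => ?_, fun h => Nat.div_add_mod n a ▸ mul_add_mem_closure_pair h⟩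
  obtain ⟨L, R, hRL, rfl⟩ : ∃ L R, R ≤ L ∧ n = a * L + R := by
    induction hn using AddSubmonoid.closure_induction with
    | mem x hx =>
      rcases hx with rfl | rfl
      exacts [⟨1, 0, zero_le_one, by ring⟩, ⟨1, 1, le_rfl, by ring⟩]
    | zero => exact ⟨0, 0, le_rfl, rfl⟩
    | add x y _ _ hx hy =>
      obtain ⟨L₁, R₁, h₁, rfl⟩ := hx
      obtain ⟨L₂, R₂, h₂, rfl⟩ := hy
      exact ⟨L₁ + L₂, R₁ + R₂, add_le_add h₁ h₂, by ring⟩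
  rw [Nat.mul_add_mod, Nat.mul_add_div ha]
  exact (Nat.mod_le R a).trans (hRL.trans (Nat.le_add_right L _))

theorem mul_add_mem_closure_pair_iff {L R : ℕ} (hR : R < a) :
    a * L + R ∈ AddSubmonoid.closure {a, a + 1} ↔ R ≤ L := by
  have ha : 0 < a := by omega
  rw [mem_closure_pair_iff ha, Nat.mul_add_mod, Nat.mul_add_div ha,
    Nat.mod_eq_of_lt hR, Nat.div_eq_of_lt hR, add_zero]

theorem exists_mul_add_of_mem_closure_pair (ha : 0 < a) {n : ℕ}
    (hn : n ∈ AddSubmonoid.closure {a, a + 1}) : ∃ μ ρ, ρ < a ∧ ρ ≤ μ ∧ a * μ + ρ = n :=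
  ⟨n / a, n % a, Nat.mod_lt n ha, (mem_closure_pair_iff ha).1 hn, Nat.div_add_mod n a⟩

theorem mul_pred_add_mem_closure_pair (ha : 0 < a) (x : ℕ) :
    a * (a - 1) + x ∈ AddSubmonoid.closure {a, a + 1} := by
  rw [mem_closure_pair_iff ha, Nat.mul_add_mod, Nat.mul_add_div ha]
  exact (Nat.le_sub_one_of_lt (Nat.mod_lt x ha)).trans (Nat.le_add_right _ _)

theorem mul_add_mem_maxPowExponents_add {μ ρ c : ℕ} (hρ : ρ ≤ μ) (hc : c ≤ μ) :
    a * μ + ρ ∈ maxPowExponents a c + AddSubmonoid.closure {a, a + 1} := by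
  obtain ⟨d, rfl⟩ := Nat.exists_eq_add_of_le hc
  refine ⟨_, mul_add_mem_maxPowExponents (min_le_right ρ c), a * d + (ρ - min ρ c),
    mul_add_mem_closure_pair (by omega), ?_⟩
  dsimp only
  rw [mul_add]
  omega

end ConsecutiveSemigroup

section ColonExponents

variable {a ℓ r p q : ℕ}

/-- The exponents of the generators of `(t^{aℓ+r}) + 𝔪^{p+1} + (t^{ap+i} : p-ℓ+r < i ≤ p)`. -/
def colonExponents (a ℓ r p : ℕ) : Set ℕ :=
  {a * ℓ + r} ∪ maxPowExponents a (p + 1) ∪ (a * p + ·) '' Set.Ioc (p - ℓ + r) p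

theorem colonExponents_finite : (colonExponents a ℓ r p).Finite :=
  ((Set.finite_singleton _).union (maxPowExponents_finite a _)).union
    ((Set.finite_Ioc _ _).image _)

theorem colonExponents_subset (hs : a * ℓ + r ∈ AddSubmonoid.closure {a, a + 1}) :
    colonExponents a ℓ r p ⊆ AddSubmonoid.closure {a, a + 1} := by
  rintro _ ((rfl | ⟨j, hj, rfl⟩) | ⟨i, hi, rfl⟩)
  · exact hs
  · exact mul_add_mem_closure_pair hj
  · exact mul_add_mem_closure_pair hi.2

theorem mem_colonExponents_add_of_forall (hr : r < a) (hrℓ : r ≤ ℓ) (hℓq : ℓ < q)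
    (hqa : q < a) (hp : p + q = a - 1 + ℓ) {m : ℕ} (hm : m ∈ AddSubmonoid.closure {a, a + 1})
    (hcol : ∀ j ∈ maxPowExponents a q,
      m + j ∈ ({a * ℓ + r} : Set ℕ) + AddSubmonoid.closure {a, a + 1}) :
    m ∈ colonExponents a ℓ r p + AddSubmonoid.closure {a, a + 1} := by
  obtain ⟨μ, ρ, hρa, hρμ, rfl⟩ := exists_mul_add_of_mem_closure_pair (by omega) hm
  by_cases hμ : p + 1 ≤ μ
  · exact Set.add_subset_add_right (Set.subset_union_right.trans Set.subset_union_left)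
      (mul_add_mem_maxPowExponents_add hρμ hμ)
  obtain ⟨D, hD⟩ : ∃ D, μ + q = ℓ + 1 + D := ⟨μ + q - ℓ - 1, by omega⟩
  have haD : a * μ + a * q = a * ℓ + a + a * D := by linear_combination a * hD
  -- `m + (aq + j) - s = a(D + 1) + (ρ + j - r)`, with a borrow from `a(D + 1)` when `ρ + j < r`.
  have hborrow : ∀ j ≤ q, ρ + j < r → a + ρ + j ≤ D + r := by
    intro j hj hjr
    obtain ⟨_, rfl, h, hh, he⟩ := hcol _ (mul_add_mem_maxPowExponents hj)
    dsimp only at he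
    rw [SetLike.mem_coe, show h = a * D + (a + ρ + j - r) by omega,
      mul_add_mem_closure_pair_iff (by omega)] at hh
    omega
  have hnoborrow : ∀ j ≤ q, r ≤ ρ + j → ρ + j < a + r → ρ + j ≤ D + 1 + r := by
    intro j hj hrj hja
    obtain ⟨_, rfl, h, hh, he⟩ := hcol _ (mul_add_mem_maxPowExponents hj)
    dsimp only at he
    rw [SetLike.mem_coe, show h = a * (D + 1) + (ρ + j - r) by rw [mul_add_one]; omega,
      mul_add_mem_closure_pair_iff (by omega)] at hh
    omega
  rcases lt_or_ge ρ r with hρr | hρr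
  · have := hborrow (r - ρ - 1) (by omega) (by omega)
    omega
  rcases lt_or_ge (ρ - r + q) a with hsmall | hbig
  · have := hnoborrow q le_rfl (by omega) (by omega)
    obtain ⟨e, rfl⟩ : ∃ e, μ = ℓ + e := ⟨μ - ℓ, by omega⟩
    refine ⟨a * ℓ + r, Or.inl (Or.inl rfl), a * e + (ρ - r),
      mul_add_mem_closure_pair (by omega), ?_⟩
    dsimp only
    rw [mul_add]
    omega
  · obtain ⟨j, hj⟩ : ∃ j, ρ + j = a - 1 + r := ⟨a - 1 + r - ρ, by omega⟩
    have := hnoborrow j (by omega) (by omega) (by omega)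
    obtain rfl : μ = p := by omega
    exact ⟨a * μ + ρ, Or.inr ⟨ρ, ⟨by omega, hρμ⟩, rfl⟩, 0, zero_mem _, add_zero _⟩

theorem forall_of_mem_colonExponents_add (hr : r < a) (hp : p + q = a - 1 + ℓ) {m : ℕ}
    (hm : m ∈ colonExponents a ℓ r p + AddSubmonoid.closure {a, a + 1}) :
    ∀ j ∈ maxPowExponents a q,
      m + j ∈ ({a * ℓ + r} : Set ℕ) + AddSubmonoid.closure {a, a + 1} := by
  have ha : 0 < a := by omega
  rintro _ ⟨j, hj, rfl⟩
  obtain ⟨g, hg, h, hh, rfl⟩ := hm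
  suffices g + (a * q + j) ∈ ({a * ℓ + r} : Set ℕ) + AddSubmonoid.closure {a, a + 1} by
    obtain ⟨_, rfl, h', hh', he⟩ := this
    exact ⟨_, rfl, h' + h, add_mem hh' hh, by dsimp only at he ⊢; omega⟩
  rcases hg with (rfl | ⟨i, -, rfl⟩) | ⟨i, ⟨hi, -⟩, rfl⟩
  · exact Set.add_mem_add rfl (mul_add_mem_closure_pair hj)
  · have : a * (p + 1) + a * q = a * (a - 1) + a * ℓ + a := by
      have e : p + 1 + q = a - 1 + ℓ + 1 := by omega
      linear_combination a * e
    exact ⟨_, rfl, _, mul_pred_add_mem_closure_pair ha (a + i + j - r), by dsimp only; omega⟩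
  · have : a * p + a * q = a * (a - 1) + a * ℓ := by linear_combination a * hp
    exact ⟨_, rfl, _, mul_pred_add_mem_closure_pair ha (i + j - r), by dsimp only; omega⟩

theorem colonExponents_zero_subset :
    colonExponents a ℓ 0 p ⊆
      (({a * ℓ} : Set ℕ) ∪ maxPowExponents a p) + AddSubmonoid.closure {a, a + 1} := by
  rintro _ ((rfl | ⟨j, hj, rfl⟩) | ⟨i, hi, rfl⟩)
  · exact Set.subset_add_left _ (zero_mem _) (Or.inl rfl)
  · exact Set.add_subset_add_right Set.subset_union_right
      (mul_add_mem_maxPowExponents_add (μ := p + 1) hj (Nat.le_succ p))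
  · exact Set.subset_add_left _ (zero_mem _) (Or.inr (mul_add_mem_maxPowExponents hi.2))

theorem subset_colonExponents_zero_add (hℓp : ℓ ≤ p) :
    ({a * ℓ} : Set ℕ) ∪ maxPowExponents a p ⊆
      colonExponents a ℓ 0 p + AddSubmonoid.closure {a, a + 1} := by
  rintro _ (rfl | ⟨j, hj, rfl⟩)
  · exact Set.subset_add_left _ (zero_mem _) (Or.inl (Or.inl rfl))
  rcases le_or_gt j (p - ℓ) with hjℓ | hjℓ
  · obtain ⟨e, rfl⟩ := Nat.exists_eq_add_of_le hℓp
    refine ⟨a * ℓ, Or.inl (Or.inl rfl), a * e + j, mul_add_mem_closure_pair (by omega), ?_⟩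
    dsimp only
    rw [mul_add]
    omega
  · exact Set.subset_add_left _ (zero_mem _) (Or.inr ⟨j, ⟨hjℓ, hj⟩, rfl⟩)

end ColonExponents

theorem stmt14_general (k : Type) [Field k] (a : ℕ)
    (H : AddSubmonoid ℕ) (hH : H = AddSubmonoid.closure {a, a + 1})
    (haH : a ∈ H) (ha1H : a + 1 ∈ H)
    (q : ℕ) (hqa : q < a)
    (ℓ r p : ℕ) (hℓq : ℓ < q) (hr : r < a) (hp : p + q = a - 1 + ℓ)
    (s : ℕ) (hsval : s = a * ℓ + r) (hs : s ∈ H)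
    (𝔪 : Ideal (ssr k H)) (h𝔪 : 𝔪 = Ideal.span {tp k H a haH, tp k H (a + 1) ha1H})
    (Q : Ideal (ssr k H)) (hQ : Q = Ideal.span {tp k H s hs})
    (I : Ideal (ssr k H)) (hI : I = Submodule.colon Q ((𝔪 ^ q : Ideal (ssr k H)) : Set (ssr k H))) :
    I = Q ⊔ 𝔪 ^ (p + 1) ⊔
        Ideal.span {x : ssr k H |
          ∃ i : ℕ, p - ℓ + r < i ∧ i ≤ p ∧ ∃ hn : a * p + i ∈ H, x = tp k H (a * p + i) hn} ∧
    (r = 0 → I = Q ⊔ 𝔪 ^ p) := by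
  subst hH hsval h𝔪 hQ hI
  have hrℓ : r ≤ ℓ := (mul_add_mem_closure_pair_iff hr).1 hs
  have hcolon := colon_monomialIdeal_eq (k := k) (Set.finite_singleton _)
    (Set.singleton_subset_iff.2 hs) (maxPowExponents_subset haH ha1H q) colonExponents_finite
    (colonExponents_subset (p := p) hs) fun m hm =>
      ⟨mem_colonExponents_add_of_forall hr hrℓ hℓq hqa hp hm,
        forall_of_mem_colonExponents_add hr hp⟩
  rw [← span_singleton_tp _ hs, ← span_pair_pow haH ha1H] at hcolon
  have htail : monomialIdeal k _ ((a * p + ·) '' Set.Ioc (p - ℓ + r) p) =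
      Ideal.span {x | ∃ i : ℕ, p - ℓ + r < i ∧ i ≤ p ∧
        ∃ hn : a * p + i ∈ AddSubmonoid.closure {a, a + 1}, x = tp k _ (a * p + i) hn} := by
    simp only [monomialIdeal, monomials_image, Set.mem_Ioc, and_assoc]
  refine ⟨?_, fun hr0 => ?_⟩
  · rw [hcolon, span_pair_pow, span_singleton_tp, ← htail, colonExponents, monomialIdeal_union,
      monomialIdeal_union]
  · subst hr0
    rw [hcolon, span_pair_pow, span_singleton_tp, ← monomialIdeal_union]
    exact le_antisymm
      (monomialIdeal_le_of_subset_add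
        (Set.union_subset (Set.singleton_subset_iff.2 hs) (maxPowExponents_subset haH ha1H p))
        colonExponents_zero_subset)
      (monomialIdeal_le_of_subset_add (colonExponents_subset hs)
        (subset_colonExponents_zero_add (by omega)))

/-- Proposition 3.5: if `q < a`, `s = aℓ + r < aq` with `1 ≤ ℓ < q`, `0 ≤ r < a`, and
`p = (a-1) + (ℓ-q)`, then `I = Q + 𝔪^{p+1} + (t^{ap+i} : p-ℓ+r < i ≤ p)`;
in particular `I = Q + 𝔪^p` when `r = 0`. -/
theorem stmt14 (k : Type) [Field k] (a : ℕ) (ha : 2 ≤ a)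
    (H : AddSubmonoid ℕ) (hH : H = AddSubmonoid.closure {a, a + 1})
    (haH : a ∈ H) (ha1H : a + 1 ∈ H)
    (q : ℕ) (hq : 0 < q) (hqa : q < a)
    (ℓ r p : ℕ) (hℓ1 : 1 ≤ ℓ) (hℓq : ℓ < q) (hr : r < a) (hp : p + q = a - 1 + ℓ)
    (s : ℕ) (hsval : s = a * ℓ + r) (hs : s ∈ H) (hsaq : s < a * q)
    (𝔪 : Ideal (ssr k H)) (h𝔪 : 𝔪 = Ideal.span {tp k H a haH, tp k H (a + 1) ha1H})
    (Q : Ideal (ssr k H)) (hQ : Q = Ideal.span {tp k H s hs})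
    (I : Ideal (ssr k H)) (hI : I = Submodule.colon Q ((𝔪 ^ q : Ideal (ssr k H)) : Set (ssr k H))) :
    I = Q ⊔ 𝔪 ^ (p + 1) ⊔
        Ideal.span {x : ssr k H |
          ∃ i : ℕ, p - ℓ + r < i ∧ i ≤ p ∧ ∃ hn : a * p + i ∈ H, x = tp k H (a * p + i) hn} ∧
    (r = 0 → I = Q ⊔ 𝔪 ^ p) :=
  stmt14_general k a H hH haH ha1H q hqa ℓ r p hℓq hr hp s hsval hs 𝔪 h𝔪 Q hQ I hI
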